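/- Let t_0 ∉ supp(ν) ∪ Θ be such that ∫ dν(x)/(t_0−x)² = 1 and ∫ dν(x)/(t_0−x)³ ≠ 0, and for ε > 0 small enough let t_0(N) be the unique point of ]t_0−ε, t_0+ε[ with ∫ dμ_{A_N}(x)/(t_0(N)−x)² = 1 (which exists for all N large enough). If ]t_0−ε, t_0[ ⊂ U_ν and ]t_0, t_0+ε[ ⊂ ℝ \ U_ν, then for all N large enough ]t_0−ε, t_0+ε[ ∩ U_N = ]t_0−ε, t_0(N)[. If instead ]t_0, t_0+ε[ ⊂ U_ν and ]t_0−ε, t_0[ ⊂ ℝ \ U_ν, then for all N large enough ]t_0−ε, t_0+ε[ ∩ U_N = ]t_0(N), t_0+ε[. -/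

import Mathlib

open MeasureTheory Filter Topology Set
open scoped ENNReal

/-- `v_μ(u) = inf {v ≥ 0 : ∫ dμ(x)/((u−x)² + v²) ≤ 1}`. -/
noncomputable def vF (μ : Measure ℝ) (u : ℝ) : ℝ :=
  sInf {v : ℝ | 0 ≤ v ∧ ∫ x, ((u - x) ^ 2 + v ^ 2)⁻¹ ∂μ ≤ 1}

/-- `U_μ = {t : v_μ(t) > 0}`. -/
def USet (μ : Measure ℝ) : Set ℝ := {t | 0 < vF μ t}

/-- `H_μ(z) = z + ∫ dμ(x)/(z−x)`. -/
noncomputable def HF (μ : Measure ℝ) (z : ℝ) : ℝ := z + ∫ x, (z - x)⁻¹ ∂μ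

/-- `Ψ_μ(t) = t + ∫ (t−x) dμ(x)/((t−x)² + v_μ(t)²)`. -/
noncomputable def PsiF (μ : Measure ℝ) (t : ℝ) : ℝ :=
  t + ∫ x, (t - x) / ((t - x) ^ 2 + vF μ t ^ 2) ∂μ

/-- The (topological) support of a measure on ℝ. -/
def MeasSupp (μ : Measure ℝ) : Set ℝ := {x | ∀ U ∈ nhds x, μ U ≠ 0}

/-- `ν̂_N = (1/(N−r)) Σ_{j=1}^{N−r} δ_{β_j(N)}`. -/
noncomputable def hatNu (r : ℕ) (β : ℕ → ℕ → ℝ) (N : ℕ) : Measure ℝ :=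
  ((N - r : ℕ) : ℝ≥0∞)⁻¹ • ∑ i ∈ Finset.range (N - r), Measure.dirac (β N i)

/-! Write `G_μ(t) = ∫ (t-x)⁻² dμ`. Both `ν` and, for large `N`, `μ_{A_N}` give no mass to a
fixed neighbourhood of `t₀`; there `t ∈ U_μ` exactly when `G_μ(t) > 1`, and
`G_μ' = -2 ∫ (t-x)⁻³ dμ`, where the third moments are uniformly Lipschitz. As `∫ (t₀-x)⁻³ dν ≠ 0`
is the limit of the third moments of `μ_{A_N}` at `t₀`, for large `N` every `G_{μ_{A_N}}` is
strictly monotone on `]t₀-ε, t₀+ε[`, in the same direction as `G_ν`; that direction is forced by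
the side of `t₀` lying in `U_ν`. Weak convergence moves `G_{μ_{A_N}}(t₀ ± ε/2)` to the values of
`G_ν`, which lie on opposite sides of `1`, so `G_{μ_{A_N}}` crosses `1` exactly once, at `t₀(N)`,
and `U_N` is the side where it exceeds `1`. -/

noncomputable def invPowMoment (μ : Measure ℝ) (n : ℕ) (t : ℝ) : ℝ :=
  ∫ x, ((t - x) ^ n)⁻¹ ∂μ

lemma abs_inv_pow_le {c y : ℝ} (hc : 0 < c) (hy : c ≤ |y|) (n : ℕ) :
    |(y ^ n)⁻¹| ≤ (c ^ n)⁻¹ := by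
  rw [abs_inv, abs_pow]
  exact inv_anti₀ (pow_pos hc n) (pow_le_pow_left₀ hc.le hy n)

lemma hasDerivAt_inv_pow_sub (n : ℕ) {x t : ℝ} (h : t ≠ x) :
    HasDerivAt (fun s => ((s - x) ^ n)⁻¹) (-n * ((t - x) ^ (n + 1))⁻¹) t := by
  have hx : t - x ≠ 0 := sub_ne_zero.2 h
  have := (((hasDerivAt_id' t).sub_const x).fun_pow n).fun_inv (pow_ne_zero n hx)
  refine this.congr_deriv ?_
  rcases n with _ | n
  · simp
  · rw [Nat.add_sub_cancel]
    field_simp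
    ring

lemma notMem_USet_of_invPowMoment_le_one {μ : Measure ℝ} {t : ℝ} (h : invPowMoment μ 2 t ≤ 1) :
    t ∉ USet μ := by
  have h0 : (0 : ℝ) ∈ {v : ℝ | 0 ≤ v ∧ ∫ x, ((t - x) ^ 2 + v ^ 2)⁻¹ ∂μ ≤ 1} :=
    ⟨le_rfl, by simpa [invPowMoment] using h⟩
  exact (csInf_le ⟨0, fun _ hv => hv.1⟩ h0).not_gt

section Separated

variable {μ : Measure ℝ} {t c : ℝ}

lemma integrable_inv_pow_sub [IsFiniteMeasure μ] (hc : 0 < c) (h : ∀ᵐ x ∂μ, c ≤ |t - x|)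
    (n : ℕ) : Integrable (fun x => ((t - x) ^ n)⁻¹) μ :=
  .of_bound (by fun_prop) _ (h.mono fun _ hx => by simpa using abs_inv_pow_le hc hx n)

lemma abs_invPowMoment_le [IsProbabilityMeasure μ] (hc : 0 < c) (h : ∀ᵐ x ∂μ, c ≤ |t - x|)
    (n : ℕ) : |invPowMoment μ n t| ≤ (c ^ n)⁻¹ := by
  simpa [invPowMoment] using norm_integral_le_of_norm_le_const (f := fun x => ((t - x) ^ n)⁻¹)
    (h.mono fun _ hx => (Real.norm_eq_abs _).trans_le (abs_inv_pow_le hc hx n))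

lemma hasDerivAt_invPowMoment [IsFiniteMeasure μ] (hc : 0 < c) (h : ∀ᵐ x ∂μ, c ≤ |t - x|)
    (n : ℕ) : HasDerivAt (invPowMoment μ n) (-n * invPowMoment μ (n + 1) t) t := by
  have hball : ∀ᵐ x ∂μ, ∀ s ∈ Metric.ball t (c / 2), c / 2 ≤ |s - x| := by
    filter_upwards [h] with x hx s hs
    rw [Metric.mem_ball, Real.dist_eq] at hs
    have := abs_sub_abs_le_abs_sub (t - x) (t - s)
    rw [show t - x - (t - s) = s - x by ring, abs_sub_comm t s] at this
    linarith
  have key := hasDerivAt_integral_of_dominated_loc_of_deriv_le (μ := μ)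
    (F := fun s x => ((s - x) ^ n)⁻¹) (F' := fun s x => -n * ((s - x) ^ (n + 1))⁻¹)
    (bound := fun _ => n * ((c / 2) ^ (n + 1))⁻¹) (Metric.ball_mem_nhds t (half_pos hc))
    (.of_forall fun _ => by fun_prop) (integrable_inv_pow_sub hc h n) (by fun_prop)
    (hball.mono fun x hx s hs => by
      rw [norm_mul, norm_neg, Real.norm_natCast]
      exact mul_le_mul_of_nonneg_left (abs_inv_pow_le (half_pos hc) (hx s hs) _) n.cast_nonneg)
    (integrable_const _)
    (hball.mono fun x hx s hs => hasDerivAt_inv_pow_sub n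
      (sub_ne_zero.1 (abs_pos.1 ((half_pos hc).trans_le (hx s hs)))))
  unfold invPowMoment
  rw [← integral_const_mul]
  exact key.2

/-- Where `|t - x| ≥ c`, the weight `((t-x)² + v²)⁻¹` is at least `c² / (c² + v²)` times
`((t-x)²)⁻¹`. -/
lemma sq_mul_invPowMoment_sub_one_le [IsFiniteMeasure μ] (hc : 0 < c)
    (h : ∀ᵐ x ∂μ, c ≤ |t - x|) {v : ℝ} (hv : ∫ x, ((t - x) ^ 2 + v ^ 2)⁻¹ ∂μ ≤ 1) :
    c ^ 2 * (invPowMoment μ 2 t - 1) ≤ v ^ 2 := by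
  have hsq : ∀ᵐ x ∂μ, c ^ 2 ≤ (t - x) ^ 2 :=
    h.mono fun x hx => by simpa using pow_le_pow_left₀ hc.le hx 2
  have hpt : ∀ᵐ x ∂μ, c ^ 2 / (c ^ 2 + v ^ 2) * ((t - x) ^ 2)⁻¹ ≤ ((t - x) ^ 2 + v ^ 2)⁻¹ := by
    filter_upwards [hsq] with x hx
    have hy : 0 < (t - x) ^ 2 := (pow_pos hc 2).trans_le hx
    rw [div_mul_eq_mul_div, ← div_eq_mul_inv, div_div, inv_eq_one_div,
      div_le_div_iff₀ (mul_pos hy (by positivity)) (by positivity)]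
    nlinarith [mul_le_mul_of_nonneg_left hx (sq_nonneg v)]
  have hint : Integrable (fun x => ((t - x) ^ 2 + v ^ 2)⁻¹) μ :=
    (integrable_inv_pow_sub hc h 2).mono' (by fun_prop) (by
      filter_upwards [hsq] with x hx
      have hy : 0 < (t - x) ^ 2 := (pow_pos hc 2).trans_le hx
      rw [Real.norm_eq_abs, abs_of_pos (by positivity)]
      exact inv_anti₀ hy (le_add_of_nonneg_right (sq_nonneg v)))
  have := (integral_mono_ae ((integrable_inv_pow_sub hc h 2).const_mul _) hint hpt).trans hv
  rw [integral_const_mul, div_mul_eq_mul_div, div_le_one (by positivity)] at this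
  unfold invPowMoment
  linarith

lemma mem_USet_iff [IsProbabilityMeasure μ] (hc : 0 < c) (h : ∀ᵐ x ∂μ, c ≤ |t - x|) :
    t ∈ USet μ ↔ 1 < invPowMoment μ 2 t := by
  refine ⟨fun ht => not_le.1 fun hle => notMem_USet_of_invPowMoment_le_one hle ht, fun hG => ?_⟩
  have hone : (1 : ℝ) ∈ {v : ℝ | 0 ≤ v ∧ ∫ x, ((t - x) ^ 2 + v ^ 2)⁻¹ ∂μ ≤ 1} := by
    have := norm_integral_le_of_norm_le_const (μ := μ) (C := 1)
      (f := fun x => ((t - x) ^ 2 + 1 ^ 2)⁻¹) (.of_forall fun x => by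
        rw [Real.norm_eq_abs, abs_of_pos (by positivity)]
        exact inv_le_one_of_one_le₀ (by nlinarith [sq_nonneg (t - x)]))
    exact ⟨zero_le_one, by simpa using (le_abs_self _).trans this⟩
  have hpos : 0 < √(c ^ 2 * (invPowMoment μ 2 t - 1)) :=
    Real.sqrt_pos.2 (mul_pos (by positivity) (by linarith))
  refine hpos.trans_le (le_csInf ⟨1, hone⟩ fun v hv => ?_)
  simpa [Real.sqrt_sq hv.1] using Real.sqrt_le_sqrt (sq_mul_invPowMoment_sub_one_le hc h hv.2)

end Separated

/-- The radius `ε` on which `3 (ρ/2)⁻⁴`, the Lipschitz constant of `invPowMoment μ 3` near `t₀`,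
moves it by at most `|h| / 4`. -/
noncomputable def stableRadius (ρ h : ℝ) : ℝ := min (ρ / 2) (|h| * (ρ / 2) ^ 4 / 12)

lemma stableRadius_pos {ρ h : ℝ} (hρ : 0 < ρ) (hh : h ≠ 0) : 0 < stableRadius ρ h :=
  lt_min (half_pos hρ) (by have := abs_pos.2 hh; positivity)

section Local

variable {μ : Measure ℝ} {t₀ ρ : ℝ}

lemma ae_half_le_abs_sub (hμ : ∀ᵐ x ∂μ, ρ ≤ |t₀ - x|) {t : ℝ} (ht : |t - t₀| ≤ ρ / 2) :
    ∀ᵐ x ∂μ, ρ / 2 ≤ |t - x| := by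
  filter_upwards [hμ] with x hx
  have := abs_sub_le t₀ t x
  rw [abs_sub_comm t₀ t] at this
  linarith

lemma abs_sub_le_of_mem_Ioo {t ε r : ℝ} (ht : t ∈ Ioo (t₀ - ε) (t₀ + ε)) (hε : ε ≤ r) :
    |t - t₀| ≤ r :=
  abs_le.2 ⟨by linarith [ht.1], by linarith [ht.2]⟩

lemma continuousOn_invPowMoment [IsFiniteMeasure μ] (hρ : 0 < ρ)
    (hμ : ∀ᵐ x ∂μ, ρ ≤ |t₀ - x|) (n : ℕ) {ε : ℝ} (hε : ε ≤ ρ / 2) :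
    ContinuousOn (invPowMoment μ n) (Ioo (t₀ - ε) (t₀ + ε)) := fun _ ht =>
  (hasDerivAt_invPowMoment (half_pos hρ)
    (ae_half_le_abs_sub hμ (abs_sub_le_of_mem_Ioo ht hε)) n).continuousAt.continuousWithinAt

variable [IsProbabilityMeasure μ]

lemma abs_invPowMoment_sub_le (hρ : 0 < ρ) (hμ : ∀ᵐ x ∂μ, ρ ≤ |t₀ - x|) (n : ℕ) {t : ℝ}
    (ht : |t - t₀| ≤ ρ / 2) :
    |invPowMoment μ n t - invPowMoment μ n t₀| ≤ n * ((ρ / 2) ^ (n + 1))⁻¹ * |t - t₀| := by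
  have hball : ∀ s ∈ Metric.closedBall t₀ (ρ / 2), ∀ᵐ x ∂μ, ρ / 2 ≤ |s - x| := fun s hs =>
    ae_half_le_abs_sub hμ (by rwa [Metric.mem_closedBall, Real.dist_eq] at hs)
  have := (convex_closedBall t₀ (ρ / 2)).norm_image_sub_le_of_norm_hasDerivWithin_le
    (fun s hs => (hasDerivAt_invPowMoment (half_pos hρ) (hball s hs) n).hasDerivWithinAt)
    (fun s hs => by
      rw [norm_mul, norm_neg, Real.norm_natCast, Real.norm_eq_abs]
      exact mul_le_mul_of_nonneg_left
        (abs_invPowMoment_le (half_pos hρ) (hball s hs) _) n.cast_nonneg)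
    (Metric.mem_closedBall_self (half_pos hρ).le)
    (by rwa [Metric.mem_closedBall, Real.dist_eq])
  simpa only [Real.norm_eq_abs] using this

lemma abs_invPowMoment_three_sub_lt (hρ : 0 < ρ) (hμ : ∀ᵐ x ∂μ, ρ ≤ |t₀ - x|) {h : ℝ}
    (hclose : |invPowMoment μ 3 t₀ - h| < |h| / 2) {t : ℝ} (ht : |t - t₀| ≤ stableRadius ρ h) :
    |invPowMoment μ 3 t - h| < |h| := by
  have hlip : |invPowMoment μ 3 t - invPowMoment μ 3 t₀| ≤ 3 * |t - t₀| / (ρ / 2) ^ 4 := by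
    convert abs_invPowMoment_sub_le hρ hμ 3 (ht.trans (min_le_left _ _)) using 1
    push_cast
    ring
  have hsmall : 3 * |t - t₀| / (ρ / 2) ^ 4 ≤ |h| / 4 := by
    rw [div_le_iff₀ (by positivity)]
    linarith [ht.trans (min_le_right _ _)]
  calc |invPowMoment μ 3 t - h|
      ≤ |invPowMoment μ 3 t - invPowMoment μ 3 t₀| + |invPowMoment μ 3 t₀ - h| :=
        abs_sub_le _ _ _
    _ < |h| := by linarith [abs_nonneg (invPowMoment μ 3 t₀ - h)]

lemma strictAntiOn_invPowMoment_two (hρ : 0 < ρ) (hμ : ∀ᵐ x ∂μ, ρ ≤ |t₀ - x|) {h ε : ℝ}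
    (hh : 0 < h) (hclose : |invPowMoment μ 3 t₀ - h| < |h| / 2) (hε : ε ≤ stableRadius ρ h) :
    StrictAntiOn (invPowMoment μ 2) (Ioo (t₀ - ε) (t₀ + ε)) := by
  refine strictAntiOn_of_deriv_neg (convex_Ioo _ _)
    (continuousOn_invPowMoment hρ hμ 2 (hε.trans (min_le_left _ _))) fun t ht => ?_
  rw [interior_Ioo] at ht
  have hsep := ae_half_le_abs_sub hμ (abs_sub_le_of_mem_Ioo ht (hε.trans (min_le_left _ _)))
  have hH := abs_invPowMoment_three_sub_lt hρ hμ hclose (abs_sub_le_of_mem_Ioo ht hε)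
  rw [(hasDerivAt_invPowMoment (half_pos hρ) hsep 2).deriv, abs_of_pos hh] at *
  have := (abs_lt.1 hH).1
  push_cast
  linarith

lemma strictMonoOn_invPowMoment_two (hρ : 0 < ρ) (hμ : ∀ᵐ x ∂μ, ρ ≤ |t₀ - x|) {h ε : ℝ}
    (hh : h < 0) (hclose : |invPowMoment μ 3 t₀ - h| < |h| / 2) (hε : ε ≤ stableRadius ρ h) :
    StrictMonoOn (invPowMoment μ 2) (Ioo (t₀ - ε) (t₀ + ε)) := by
  refine strictMonoOn_of_deriv_pos (convex_Ioo _ _)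
    (continuousOn_invPowMoment hρ hμ 2 (hε.trans (min_le_left _ _))) fun t ht => ?_
  rw [interior_Ioo] at ht
  have hsep := ae_half_le_abs_sub hμ (abs_sub_le_of_mem_Ioo ht (hε.trans (min_le_left _ _)))
  have hH := abs_invPowMoment_three_sub_lt hρ hμ hclose (abs_sub_le_of_mem_Ioo ht hε)
  rw [(hasDerivAt_invPowMoment (half_pos hρ) hsep 2).deriv, abs_of_neg hh] at *
  have := (abs_lt.1 hH).2
  push_cast
  linarith

end Local

lemma exists_eq_one_of_strictAntiOn {F : ℝ → ℝ} {S : Set ℝ} {a b a' b' : ℝ}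
    (hF : StrictAntiOn F (Ioo a b)) (hFc : ContinuousOn F (Ioo a b))
    (hS : ∀ t ∈ Ioo a b, t ∈ S ↔ 1 < F t) (ha' : a' ∈ Ioo a b) (hb' : b' ∈ Ioo a b)
    (h1 : 1 < F a') (h2 : F b' < 1) :
    ∃ tN ∈ Ioo a b, F tN = 1 ∧ (∀ t ∈ Ioo a b, F t = 1 → t = tN) ∧
      Ioo a b ∩ S = Ioo a tN := by
  obtain ⟨tN, htN, hFtN⟩ := isPreconnected_Ioo.intermediate_value hb' ha' hFc ⟨h2.le, h1.le⟩
  refine ⟨tN, htN, hFtN, fun t ht h => hF.injOn ht htN (h.trans hFtN.symm), ?_⟩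
  ext t
  constructor
  · rintro ⟨ht, htS⟩
    exact ⟨ht.1, (hF.lt_iff_gt htN ht).1 (hFtN ▸ (hS t ht).1 htS)⟩
  · rintro ⟨hat, htN'⟩
    have ht : t ∈ Ioo a b := ⟨hat, htN'.trans htN.2⟩
    exact ⟨ht, (hS t ht).2 (hFtN ▸ (hF.lt_iff_gt htN ht).2 htN')⟩

lemma exists_eq_one_of_strictMonoOn {F : ℝ → ℝ} {S : Set ℝ} {a b a' b' : ℝ}
    (hF : StrictMonoOn F (Ioo a b)) (hFc : ContinuousOn F (Ioo a b))
    (hS : ∀ t ∈ Ioo a b, t ∈ S ↔ 1 < F t) (ha' : a' ∈ Ioo a b) (hb' : b' ∈ Ioo a b)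
    (h1 : F a' < 1) (h2 : 1 < F b') :
    ∃ tN ∈ Ioo a b, F tN = 1 ∧ (∀ t ∈ Ioo a b, F t = 1 → t = tN) ∧
      Ioo a b ∩ S = Ioo tN b := by
  obtain ⟨tN, htN, hFtN⟩ := isPreconnected_Ioo.intermediate_value ha' hb' hFc ⟨h1.le, h2.le⟩
  refine ⟨tN, htN, hFtN, fun t ht h => hF.injOn ht htN (h.trans hFtN.symm), ?_⟩
  ext t
  constructor
  · rintro ⟨ht, htS⟩
    exact ⟨(hF.lt_iff_lt htN ht).1 (hFtN ▸ (hS t ht).1 htS), ht.2⟩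
  · rintro ⟨htN', htb⟩
    have ht : t ∈ Ioo a b := ⟨htN.1.trans htN', htb⟩
    exact ⟨ht, (hS t ht).2 (hFtN ▸ (hF.lt_iff_lt htN ht).2 htN')⟩

/-- `y ↦ yⁿ / max(|y|, c)²ⁿ` is a bounded continuous function equal to `y⁻ⁿ` on `|y| ≥ c`. -/
lemma exists_bcf_eq_inv_pow_sub (s : ℝ) {c : ℝ} (hc : 0 < c) (n : ℕ) :
    ∃ F : BoundedContinuousFunction ℝ ℝ, ∀ x, c ≤ |s - x| → F x = ((s - x) ^ n)⁻¹ := by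
  have hM : ∀ x, 0 < max |s - x| c := fun x => hc.trans_le (le_max_right _ _)
  have hcont : Continuous fun x => (s - x) ^ n / max |s - x| c ^ (2 * n) :=
    by fun_prop (disch := exact fun x => (pow_pos (hM x) _).ne')
  refine ⟨.ofNormedAddCommGroup _ hcont (c ^ n)⁻¹ fun x => ?_, fun x hx => ?_⟩
  · rw [Real.norm_eq_abs, abs_div, abs_pow, abs_of_pos (pow_pos (hM x) _), pow_mul', sq,
      div_le_iff₀ (by have := hM x; positivity)]
    calc |s - x| ^ n ≤ max |s - x| c ^ n := pow_le_pow_left₀ (abs_nonneg _) (le_max_left _ _) n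
      _ = (c ^ n)⁻¹ * (c ^ n * max |s - x| c ^ n) := by field_simp
      _ ≤ (c ^ n)⁻¹ * (max |s - x| c ^ n * max |s - x| c ^ n) := by
        gcongr
        exact le_max_right _ _
  · have hne : (s - x) ^ n ≠ 0 := pow_ne_zero _ (abs_pos.1 (hc.trans_le hx))
    change (s - x) ^ n / max |s - x| c ^ (2 * n) = _
    rw [max_eq_left hx, pow_mul, sq_abs, ← pow_mul, mul_comm, pow_mul,
      div_eq_iff (pow_ne_zero 2 hne)]
    field_simp

lemma tendsto_invPowMoment {ι : Type*} {l : Filter ι} {μ : ι → Measure ℝ} {ν : Measure ℝ}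
    (hweak : ∀ f : BoundedContinuousFunction ℝ ℝ,
      Tendsto (fun i => ∫ x, f x ∂μ i) l (𝓝 (∫ x, f x ∂ν)))
    {s c : ℝ} (hc : 0 < c) (hμ : ∀ᶠ i in l, ∀ᵐ x ∂μ i, c ≤ |s - x|)
    (hν : ∀ᵐ x ∂ν, c ≤ |s - x|) (n : ℕ) :
    Tendsto (fun i => invPowMoment (μ i) n s) l (𝓝 (invPowMoment ν n s)) := by
  obtain ⟨F, hF⟩ := exists_bcf_eq_inv_pow_sub s hc n
  have key : ∀ m : Measure ℝ, (∀ᵐ x ∂m, c ≤ |s - x|) → ∫ x, F x ∂m = invPowMoment m n s :=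
    fun m hm => integral_congr_ae (hm.mono fun x hx => hF x hx)
  rw [← key ν hν]
  exact (hweak F).congr' (hμ.mono fun i hi => key _ hi)

section Crossing

variable {ι : Type*} {l : Filter ι} {ν : Measure ℝ} [IsProbabilityMeasure ν]
  {μ : ι → Measure ℝ} [∀ i, IsProbabilityMeasure (μ i)] {t₀ ρ ε : ℝ}

lemma invPowMoment_three_pos_of_Ioo_subset_USet (hρ : 0 < ρ)
    (hν : ∀ᵐ x ∂ν, ρ ≤ |t₀ - x|) (hG₀ : invPowMoment ν 2 t₀ = 1)
    (hH₀ : invPowMoment ν 3 t₀ ≠ 0) (hε : 0 < ε) (hεr : ε ≤ stableRadius ρ (invPowMoment ν 3 t₀))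
    (hU : Ioo (t₀ - ε) t₀ ⊆ USet ν) : 0 < invPowMoment ν 3 t₀ := by
  refine hH₀.lt_or_gt.resolve_left fun hneg => ?_
  have hmono := strictMonoOn_invPowMoment_two hρ hν hneg
    (by rw [sub_self, abs_zero]; positivity) hεr
  refine notMem_USet_of_invPowMoment_le_one ?_ (hU ⟨by linarith, by linarith⟩ : t₀ - ε / 2 ∈ USet ν)
  exact hG₀ ▸ (hmono ⟨by linarith, by linarith⟩ ⟨by linarith, by linarith⟩ (by linarith)).le

lemma invPowMoment_three_neg_of_Ioo_subset_USet (hρ : 0 < ρ)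
    (hν : ∀ᵐ x ∂ν, ρ ≤ |t₀ - x|) (hG₀ : invPowMoment ν 2 t₀ = 1)
    (hH₀ : invPowMoment ν 3 t₀ ≠ 0) (hε : 0 < ε) (hεr : ε ≤ stableRadius ρ (invPowMoment ν 3 t₀))
    (hU : Ioo t₀ (t₀ + ε) ⊆ USet ν) : invPowMoment ν 3 t₀ < 0 := by
  refine hH₀.lt_or_gt.resolve_right fun hpos => ?_
  have hanti := strictAntiOn_invPowMoment_two hρ hν hpos
    (by rw [sub_self, abs_zero]; positivity) hεr
  refine notMem_USet_of_invPowMoment_le_one ?_ (hU ⟨by linarith, by linarith⟩ : t₀ + ε / 2 ∈ USet ν)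
  exact hG₀ ▸ (hanti ⟨by linarith, by linarith⟩ ⟨by linarith, by linarith⟩ (by linarith)).le

lemma eventually_crossing_left (hρ : 0 < ρ) (hν : ∀ᵐ x ∂ν, ρ ≤ |t₀ - x|)
    (hμ : ∀ᶠ i in l, ∀ᵐ x ∂μ i, ρ ≤ |t₀ - x|)
    (hG : ∀ s, |s - t₀| ≤ ρ / 2 →
      Tendsto (fun i => invPowMoment (μ i) 2 s) l (𝓝 (invPowMoment ν 2 s)))
    (hH : Tendsto (fun i => invPowMoment (μ i) 3 t₀) l (𝓝 (invPowMoment ν 3 t₀)))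
    (hG₀ : invPowMoment ν 2 t₀ = 1) (hH₀ : invPowMoment ν 3 t₀ ≠ 0) (hε : 0 < ε)
    (hεr : ε ≤ stableRadius ρ (invPowMoment ν 3 t₀)) (hU : Ioo (t₀ - ε) t₀ ⊆ USet ν) :
    ∀ᶠ i in l, ∃ tN ∈ Ioo (t₀ - ε) (t₀ + ε), invPowMoment (μ i) 2 tN = 1 ∧
      (∀ t ∈ Ioo (t₀ - ε) (t₀ + ε), invPowMoment (μ i) 2 t = 1 → t = tN) ∧
      Ioo (t₀ - ε) (t₀ + ε) ∩ USet (μ i) = Ioo (t₀ - ε) tN := by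
  have hpos := invPowMoment_three_pos_of_Ioo_subset_USet hρ hν hG₀ hH₀ hε hεr hU
  have hε2 : ε ≤ ρ / 2 := hεr.trans (min_le_left _ _)
  have hl : t₀ - ε / 2 ∈ Ioo (t₀ - ε) (t₀ + ε) := ⟨by linarith, by linarith⟩
  have hr : t₀ + ε / 2 ∈ Ioo (t₀ - ε) (t₀ + ε) := ⟨by linarith, by linarith⟩
  have hc : t₀ ∈ Ioo (t₀ - ε) (t₀ + ε) := ⟨by linarith, by linarith⟩
  have hanti := strictAntiOn_invPowMoment_two hρ hν hpos
    (by rw [sub_self, abs_zero]; positivity) hεr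
  have h1 : 1 < invPowMoment ν 2 (t₀ - ε / 2) := hG₀ ▸ hanti hl hc (by linarith)
  have h2 : invPowMoment ν 2 (t₀ + ε / 2) < 1 := hG₀ ▸ hanti hc hr (by linarith)
  filter_upwards [hμ, Metric.tendsto_nhds.1 hH _ (half_pos (abs_pos.2 hH₀)),
    (hG _ (abs_sub_le_of_mem_Ioo hl hε2)).eventually (lt_mem_nhds h1),
    (hG _ (abs_sub_le_of_mem_Ioo hr hε2)).eventually (gt_mem_nhds h2)] with i hsep hclose h1 h2
  exact exists_eq_one_of_strictAntiOn (strictAntiOn_invPowMoment_two hρ hsep hpos hclose hεr)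
    (continuousOn_invPowMoment hρ hsep 2 hε2) (fun t ht => mem_USet_iff (half_pos hρ)
      (ae_half_le_abs_sub hsep (abs_sub_le_of_mem_Ioo ht hε2))) hl hr h1 h2

lemma eventually_crossing_right (hρ : 0 < ρ) (hν : ∀ᵐ x ∂ν, ρ ≤ |t₀ - x|)
    (hμ : ∀ᶠ i in l, ∀ᵐ x ∂μ i, ρ ≤ |t₀ - x|)
    (hG : ∀ s, |s - t₀| ≤ ρ / 2 →
      Tendsto (fun i => invPowMoment (μ i) 2 s) l (𝓝 (invPowMoment ν 2 s)))
    (hH : Tendsto (fun i => invPowMoment (μ i) 3 t₀) l (𝓝 (invPowMoment ν 3 t₀)))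
    (hG₀ : invPowMoment ν 2 t₀ = 1) (hH₀ : invPowMoment ν 3 t₀ ≠ 0) (hε : 0 < ε)
    (hεr : ε ≤ stableRadius ρ (invPowMoment ν 3 t₀)) (hU : Ioo t₀ (t₀ + ε) ⊆ USet ν) :
    ∀ᶠ i in l, ∃ tN ∈ Ioo (t₀ - ε) (t₀ + ε), invPowMoment (μ i) 2 tN = 1 ∧
      (∀ t ∈ Ioo (t₀ - ε) (t₀ + ε), invPowMoment (μ i) 2 t = 1 → t = tN) ∧
      Ioo (t₀ - ε) (t₀ + ε) ∩ USet (μ i) = Ioo tN (t₀ + ε) := by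
  have hneg := invPowMoment_three_neg_of_Ioo_subset_USet hρ hν hG₀ hH₀ hε hεr hU
  have hε2 : ε ≤ ρ / 2 := hεr.trans (min_le_left _ _)
  have hl : t₀ - ε / 2 ∈ Ioo (t₀ - ε) (t₀ + ε) := ⟨by linarith, by linarith⟩
  have hr : t₀ + ε / 2 ∈ Ioo (t₀ - ε) (t₀ + ε) := ⟨by linarith, by linarith⟩
  have hc : t₀ ∈ Ioo (t₀ - ε) (t₀ + ε) := ⟨by linarith, by linarith⟩
  have hmono := strictMonoOn_invPowMoment_two hρ hν hneg
    (by rw [sub_self, abs_zero]; positivity) hεr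
  have h1 : invPowMoment ν 2 (t₀ - ε / 2) < 1 := hG₀ ▸ hmono hl hc (by linarith)
  have h2 : 1 < invPowMoment ν 2 (t₀ + ε / 2) := hG₀ ▸ hmono hc hr (by linarith)
  filter_upwards [hμ, Metric.tendsto_nhds.1 hH _ (half_pos (abs_pos.2 hH₀)),
    (hG _ (abs_sub_le_of_mem_Ioo hl hε2)).eventually (gt_mem_nhds h1),
    (hG _ (abs_sub_le_of_mem_Ioo hr hε2)).eventually (lt_mem_nhds h2)] with i hsep hclose h1 h2
  exact exists_eq_one_of_strictMonoOn (strictMonoOn_invPowMoment_two hρ hsep hneg hclose hεr)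
    (continuousOn_invPowMoment hρ hsep 2 hε2) (fun t ht => mem_USet_iff (half_pos hρ)
      (ae_half_le_abs_sub hsep (abs_sub_le_of_mem_Ioo ht hε2))) hl hr h1 h2

end Crossing

lemma ae_smul_add_sum_dirac {ι κ : Type*} {P : ℝ → Prop} (c : ℝ≥0∞) {s : Finset ι}
    {w : ι → ℝ≥0∞} {a : ι → ℝ} {u : Finset κ} {b : κ → ℝ} (ha : ∀ j ∈ s, P (a j))
    (hb : ∀ i ∈ u, P (b i)) :
    ∀ᵐ x ∂(c • ((∑ j ∈ s, w j • Measure.dirac (a j)) + ∑ i ∈ u, Measure.dirac (b i))), P x := by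
  refine Measure.ae_smul_measure (ae_add_measure_iff.2 ⟨ae_finsetSum_measure_iff.2 fun j hj =>
    Measure.ae_smul_measure ?_ _, ae_finsetSum_measure_iff.2 fun i hi => ?_⟩) _ <;>
    rw [ae_dirac_eq, eventually_pure]
  exacts [ha j hj, hb i hi]

lemma measSupp_eq_support (μ : Measure ℝ) : MeasSupp μ = μ.support := by
  ext x
  simp [MeasSupp, Measure.mem_support_iff_forall, pos_iff_ne_zero]

lemma exists_forall_two_mul_le_abs_sub {K : Set ℝ} (hK : IsClosed K) {t : ℝ} (ht : t ∉ K) :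
    ∃ ρ > 0, ∀ x ∈ K, 2 * ρ ≤ |t - x| := by
  obtain ⟨ε, hε, hball⟩ := Metric.isOpen_iff.1 hK.isOpen_compl t ht
  refine ⟨ε / 2, half_pos hε, fun x hx => ?_⟩
  have : ¬ dist x t < ε := fun h => hball h hx
  rw [Real.dist_eq, abs_sub_comm] at this
  linarith

lemma le_abs_sub_of_infDist_lt {K : Set ℝ} (hne : K.Nonempty) {t y ρ : ℝ}
    (hK : ∀ x ∈ K, 2 * ρ ≤ |t - x|) (hy : Metric.infDist y K < ρ) : ρ ≤ |t - y| := by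
  obtain ⟨x, hx, hxy⟩ := (Metric.infDist_lt_iff hne).1 hy
  have := abs_sub_le t y x
  rw [Real.dist_eq] at hxy
  linarith [hK x hx]

theorem stmt11_general
    (ν : Measure ℝ) [IsProbabilityMeasure ν]
    (J r : ℕ) (θ : Fin J → ℝ) (k : Fin J → ℕ)
    (β : ℕ → ℕ → ℝ) (μA : ℕ → Measure ℝ)
    (hprob : ∀ N, IsProbabilityMeasure (μA N))
    (hdecomp : ∀ N, r ≤ N → μA N = (N : ℝ≥0∞)⁻¹ •
      ((∑ j, (k j : ℝ≥0∞) • Measure.dirac (θ j)) +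
        ∑ i ∈ Finset.range (N - r), Measure.dirac (β N i)))
    (hweak : ∀ f : BoundedContinuousFunction ℝ ℝ,
      Tendsto (fun N => ∫ x, f x ∂(μA N)) atTop (𝓝 (∫ x, f x ∂ν)))
    (hβ : ∀ ε > 0, ∀ᶠ N in atTop, ∀ i ∈ Finset.range (N - r),
      Metric.infDist (β N i) (MeasSupp ν) < ε)
    (t₀ : ℝ) (ht₀ : t₀ ∉ MeasSupp ν ∪ Set.range θ)
    (h2 : ∫ x, ((t₀ - x) ^ 2)⁻¹ ∂ν = 1) (h3 : ∫ x, ((t₀ - x) ^ 3)⁻¹ ∂ν ≠ 0) :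
    ∃ ε₀ > (0 : ℝ), ∀ ε, 0 < ε → ε ≤ ε₀ →
      ((Set.Ioo (t₀ - ε) t₀ ⊆ USet ν ∧ Set.Ioo t₀ (t₀ + ε) ⊆ (USet ν)ᶜ) →
        ∀ᶠ N in atTop, ∃ tN ∈ Set.Ioo (t₀ - ε) (t₀ + ε),
          (∫ x, ((tN - x) ^ 2)⁻¹ ∂(μA N)) = 1 ∧
          (∀ t' ∈ Set.Ioo (t₀ - ε) (t₀ + ε),
            (∫ x, ((t' - x) ^ 2)⁻¹ ∂(μA N)) = 1 → t' = tN) ∧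
          Set.Ioo (t₀ - ε) (t₀ + ε) ∩ USet (μA N) = Set.Ioo (t₀ - ε) tN) ∧
      ((Set.Ioo t₀ (t₀ + ε) ⊆ USet ν ∧ Set.Ioo (t₀ - ε) t₀ ⊆ (USet ν)ᶜ) →
        ∀ᶠ N in atTop, ∃ tN ∈ Set.Ioo (t₀ - ε) (t₀ + ε),
          (∫ x, ((tN - x) ^ 2)⁻¹ ∂(μA N)) = 1 ∧
          (∀ t' ∈ Set.Ioo (t₀ - ε) (t₀ + ε),
            (∫ x, ((t' - x) ^ 2)⁻¹ ∂(μA N)) = 1 → t' = tN) ∧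
          Set.Ioo (t₀ - ε) (t₀ + ε) ∩ USet (μA N) = Set.Ioo tN (t₀ + ε)) := by
  have hsupp := measSupp_eq_support ν
  obtain ⟨ρ, hρ, hK⟩ := exists_forall_two_mul_le_abs_sub
    ((hsupp ▸ Measure.isClosed_support).union (finite_range θ).isClosed) ht₀
  have hae : ∀ᵐ x ∂ν, x ∈ MeasSupp ν := by
    rw [hsupp]
    exact Measure.support_mem_ae
  have hν : ∀ᵐ x ∂ν, ρ ≤ |t₀ - x| := hae.mono fun x hx => by linarith [hK x (Or.inl hx)]
  have hμ : ∀ᶠ N in atTop, ∀ᵐ x ∂μA N, ρ ≤ |t₀ - x| := by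
    filter_upwards [eventually_ge_atTop r, hβ ρ hρ] with N hN hβN
    rw [hdecomp N hN]
    exact ae_smul_add_sum_dirac _ (fun j _ => by linarith [hK _ (Or.inr ⟨j, rfl⟩)])
      fun i hi => le_abs_sub_of_infDist_lt (hsupp ▸ Measure.nonempty_support (NeZero.ne ν))
        (fun x hx => hK x (Or.inl hx)) (hβN i hi)
  have hG : ∀ s, |s - t₀| ≤ ρ / 2 →
      Tendsto (fun N => invPowMoment (μA N) 2 s) atTop (𝓝 (invPowMoment ν 2 s)) :=
    fun s hs => tendsto_invPowMoment hweak (half_pos hρ)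
      (hμ.mono fun N hN => ae_half_le_abs_sub hN hs) (ae_half_le_abs_sub hν hs) 2
  have hH := tendsto_invPowMoment hweak hρ hμ hν 3
  refine ⟨stableRadius ρ _, stableRadius_pos hρ h3, fun ε hε hεr => ⟨fun hU => ?_, fun hU => ?_⟩⟩
  · exact eventually_crossing_left hρ hν hμ hG hH h2 h3 hε hεr hU.1
  · exact eventually_crossing_right hρ hν hμ hG hH h2 h3 hε hεr hU.1

/-- near a point `t₀ ∉ supp(ν) ∪ Θ` with `∫ dν/(t₀−x)² = 1` and
`∫ dν/(t₀−x)³ ≠ 0`, for small `ε` and large `N` the unique solution `t₀(N)` of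
`∫ dμ_{A_N}(x)/(t−x)² = 1` in `]t₀−ε,t₀+ε[` satisfies:
if `]t₀−ε,t₀[ ⊆ U_ν` and `]t₀,t₀+ε[ ⊆ ℝ \ U_ν` then
`]t₀−ε,t₀+ε[ ∩ U_N = ]t₀−ε,t₀(N)[`; and symmetrically in the other case. -/
theorem stmt11
    (ν : Measure ℝ) [IsProbabilityMeasure ν] (hcomp : IsCompact (MeasSupp ν))
    (J r : ℕ) (θ : Fin J → ℝ) (k : Fin J → ℕ)
    (hθanti : StrictAnti θ) (hθsupp : ∀ j, θ j ∉ MeasSupp ν)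
    (hkpos : ∀ j, 0 < k j) (hkr : ∑ j, k j = r)
    (β : ℕ → ℕ → ℝ) (μA : ℕ → Measure ℝ)
    (hprob : ∀ N, IsProbabilityMeasure (μA N))
    (hdecomp : ∀ N, r ≤ N → μA N = (N : ℝ≥0∞)⁻¹ •
      ((∑ j, (k j : ℝ≥0∞) • Measure.dirac (θ j)) +
        ∑ i ∈ Finset.range (N - r), Measure.dirac (β N i)))
    (hweak : ∀ f : BoundedContinuousFunction ℝ ℝ,
      Tendsto (fun N => ∫ x, f x ∂(μA N)) atTop (𝓝 (∫ x, f x ∂ν)))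
    (hβ : ∀ ε > 0, ∀ᶠ N in atTop, ∀ i ∈ Finset.range (N - r),
      Metric.infDist (β N i) (MeasSupp ν) < ε)
    (t₀ : ℝ) (ht₀ : t₀ ∉ MeasSupp ν ∪ Set.range θ)
    (h2 : ∫ x, ((t₀ - x) ^ 2)⁻¹ ∂ν = 1) (h3 : ∫ x, ((t₀ - x) ^ 3)⁻¹ ∂ν ≠ 0) :
    ∃ ε₀ > (0 : ℝ), ∀ ε, 0 < ε → ε ≤ ε₀ →
      ((Set.Ioo (t₀ - ε) t₀ ⊆ USet ν ∧ Set.Ioo t₀ (t₀ + ε) ⊆ (USet ν)ᶜ) →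
        ∀ᶠ N in atTop, ∃ tN ∈ Set.Ioo (t₀ - ε) (t₀ + ε),
          (∫ x, ((tN - x) ^ 2)⁻¹ ∂(μA N)) = 1 ∧
          (∀ t' ∈ Set.Ioo (t₀ - ε) (t₀ + ε),
            (∫ x, ((t' - x) ^ 2)⁻¹ ∂(μA N)) = 1 → t' = tN) ∧
          Set.Ioo (t₀ - ε) (t₀ + ε) ∩ USet (μA N) = Set.Ioo (t₀ - ε) tN) ∧
      ((Set.Ioo t₀ (t₀ + ε) ⊆ USet ν ∧ Set.Ioo (t₀ - ε) t₀ ⊆ (USet ν)ᶜ) →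
        ∀ᶠ N in atTop, ∃ tN ∈ Set.Ioo (t₀ - ε) (t₀ + ε),
          (∫ x, ((tN - x) ^ 2)⁻¹ ∂(μA N)) = 1 ∧
          (∀ t' ∈ Set.Ioo (t₀ - ε) (t₀ + ε),
            (∫ x, ((t' - x) ^ 2)⁻¹ ∂(μA N)) = 1 → t' = tN) ∧
          Set.Ioo (t₀ - ε) (t₀ + ε) ∩ USet (μA N) = Set.Ioo tN (t₀ + ε)) :=
  stmt11_general ν J r θ k β μA hprob hdecomp hweak hβ t₀ ht₀ h2 h3
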